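/- (Left-boundary chain estimate.) Let I ≥ 2 and real numbers a_1 < a_2 < b_1 < a_3 < b_2 < ⋯ < a_I < b_{I−1} < b_I (i.e. a_l < a_{l+1} < b_l < b_{l+1}). For k ∈ ℕ and 1 ≤ l ≤ I let M_l^k : [a_l, b_l] → [0,∞) be bounded functions, and set E_k = max_{1≤l≤I} sup_{[a_l,b_l]} M_l^k. Assume the transmission relations M_l^{k+1}(b_l) ≤ M_{l+1}^k(b_l) for 1 ≤ l ≤ I−1 and M_l^{k+1}(a_l) ≤ M_{l−1}^k(a_l) for 2 ≤ l ≤ I, for all k. Assume there are ρ ∈ (0,1) and strictly positive functions ψ_l : [a_l,b_l] → (0,∞) for 1 ≤ l ≤ I−1 with ψ_l(b_l) ≤ ρ ψ_l(a_{l+1}) for 1 ≤ l ≤ I−1 and ψ_l(a_l) ≤ ψ_l(a_{l+1}) for 2 ≤ l ≤ I−1, such that for all k and all x ∈ [a_l,b_l]: M_l^k(x) ψ_l(x) ≤ max( M_l^k(a_l) ψ_l(a_l), M_l^k(b_l) ψ_l(b_l) ) for 2 ≤ l ≤ I−1, and M_1^k(x) ψ_1(x) ≤ M_1^k(b_1)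 ψ_1(b_1). Then for every k ≥ 0 and every j ∈ {1,…,I−1}: M_{1+j}^{k+j}(a_{1+j}) ≤ ρ · max{E_k, E_{k+1}, …, E_{k+j−1}}. -/
import Mathlib


open Set Filter

/-- Left-boundary chain estimate. -/
theorem left_boundary_chain_estimate
    (I : ℕ) (hI : 2 ≤ I)
    (a b : ℕ → ℝ)
    (horder : ∀ l, 1 ≤ l → l + 1 ≤ I →
      a l < a (l + 1) ∧ a (l + 1) < b l ∧ b l < b (l + 1))
    (M : ℕ → ℕ → ℝ → ℝ)
    (hM_nonneg : ∀ k l, 1 ≤ l → l ≤ I → ∀ x ∈ Icc (a l) (b l), 0 ≤ M k l x)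
    (hM_bdd : ∀ k l, 1 ≤ l → l ≤ I → ∃ C, ∀ x ∈ Icc (a l) (b l), M k l x ≤ C)
    (E : ℕ → ℝ)
    (hE : ∀ k, E k =
      sSup {y : ℝ | ∃ l, 1 ≤ l ∧ l ≤ I ∧ ∃ x ∈ Icc (a l) (b l), y = M k l x})
    (htrans_b : ∀ k l, 1 ≤ l → l + 1 ≤ I → M (k + 1) l (b l) ≤ M k (l + 1) (b l))
    (htrans_a : ∀ k l, 2 ≤ l → l ≤ I → M (k + 1) l (a l) ≤ M k (l - 1) (a l))
    (ρ : ℝ) (hρ0 : 0 < ρ) (hρ1 : ρ < 1)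
    (ψ : ℕ → ℝ → ℝ)
    (hψ_pos : ∀ l, 1 ≤ l → l + 1 ≤ I → ∀ x ∈ Icc (a l) (b l), 0 < ψ l x)
    (hψ_contr : ∀ l, 1 ≤ l → l + 1 ≤ I → ψ l (b l) ≤ ρ * ψ l (a (l + 1)))
    (hψ_mono : ∀ l, 2 ≤ l → l + 1 ≤ I → ψ l (a l) ≤ ψ l (a (l + 1)))
    (hmax_mid : ∀ k l, 2 ≤ l → l + 1 ≤ I → ∀ x ∈ Icc (a l) (b l),
      M k l x * ψ l x ≤ max (M k l (a l) * ψ l (a l)) (M k l (b l) * ψ l (b l)))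
    (hmax_first : ∀ k, ∀ x ∈ Icc (a 1) (b 1),
      M k 1 x * ψ 1 x ≤ M k 1 (b 1) * ψ 1 (b 1)) :
    ∀ k, ∀ j, ∀ (hj : 1 ≤ j), j + 1 ≤ I →
      M (k + j) (1 + j) (a (1 + j)) ≤
        ρ * (Finset.range j).sup' (Finset.nonempty_range_iff.mpr (by omega))
          (fun m => E (k + m)) := by

  classical
  -- Every value M k l x (with admissible l, x) is at most E k.
  have hle_E : ∀ k l, 1 ≤ l → l ≤ I → ∀ x ∈ Icc (a l) (b l), M k l x ≤ E k := by
    intro k l h1 h2 x hx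
    rw [hE k]
    have hne1 : (1 : ℕ) ∈ Finset.Icc 1 I := by
      simp [Finset.mem_Icc]; omega
    set D : ℕ → ℝ := fun l =>
      if h : 1 ≤ l ∧ l ≤ I then (hM_bdd k l h.1 h.2).choose else 0 with hD
    have hbdd : BddAbove {y : ℝ | ∃ l, 1 ≤ l ∧ l ≤ I ∧ ∃ x ∈ Icc (a l) (b l), y = M k l x} := by
      refine ⟨(Finset.Icc 1 I).sup' ⟨1, hne1⟩ D, ?_⟩
      rintro y ⟨l', h1', h2', x', hx', rfl⟩
      have : M k l' x' ≤ D l' := by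
        simp only [hD, dif_pos (And.intro h1' h2')]
        exact (hM_bdd k l' h1' h2').choose_spec x' hx'
      exact this.trans (Finset.le_sup' D (by simp [Finset.mem_Icc]; omega))
    exact le_csSup hbdd ⟨l, h1, h2, x, hx, rfl⟩
  intro k j
  induction j with
  | zero => intro hj; omega
  | succ j IH =>
    intro hj hjI
    rcases Nat.eq_zero_or_pos j with hj0 | hj0
    · -- base case j = 1
      subst hj0
      have h2I : 2 ≤ I := by omega
      have hord := horder 1 le_rfl h2I
      have ha2 : a 2 ∈ Icc (a 1) (b 1) := ⟨hord.1.le, hord.2.1.le⟩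
      have hb1 : b 1 ∈ Icc (a 1) (b 1) := ⟨hord.1.trans hord.2.1 |>.le, le_rfl⟩
      have h1 : M (k + 1) 2 (a 2) ≤ M k 1 (a 2) := htrans_a k 2 le_rfl h2I
      have h2 : M k 1 (a 2) * ψ 1 (a 2) ≤ M k 1 (b 1) * ψ 1 (b 1) := hmax_first k (a 2) ha2
      have hψa2 : 0 < ψ 1 (a 2) := hψ_pos 1 le_rfl h2I (a 2) ha2
      have hMb1 : 0 ≤ M k 1 (b 1) := hM_nonneg k 1 le_rfl (by omega) (b 1) hb1
      have h3 : M k 1 (b 1) * ψ 1 (b 1) ≤ (ρ * M k 1 (b 1)) * ψ 1 (a 2) := by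
        have := mul_le_mul_of_nonneg_left (hψ_contr 1 le_rfl h2I) hMb1
        nlinarith
      have h4 : M k 1 (a 2) ≤ ρ * M k 1 (b 1) :=
        le_of_mul_le_mul_right (h2.trans h3) hψa2
      have h5 : M k 1 (b 1) ≤ E k := hle_E k 1 le_rfl (by omega) (b 1) hb1
      have h6 : (Finset.range 1).sup' (Finset.nonempty_range_iff.mpr (by omega))
          (fun m => E (k + m)) = E k := by simp
      calc M (k + 1) (1 + 1) (a (1 + 1)) ≤ ρ * M k 1 (b 1) := h1.trans h4
        _ ≤ _ := by rw [h6]; exact mul_le_mul_of_nonneg_left h5 hρ0.le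
    · -- inductive step: j ≥ 1
      have hj1 : 1 ≤ j := hj0
      have hIH := IH hj1 (by omega)
      set l := 1 + j with hl
      have h2l : 2 ≤ l := by omega
      have hlI : l + 1 ≤ I := by omega
      have hord := horder l (by omega) hlI
      have hal1 : a (l + 1) ∈ Icc (a l) (b l) := ⟨hord.1.le, hord.2.1.le⟩
      have hbl : b l ∈ Icc (a l) (b l) := ⟨(hord.1.trans hord.2.1).le, le_rfl⟩
      have hal : a l ∈ Icc (a l) (b l) := ⟨le_rfl, (hord.1.trans hord.2.1).le⟩
      -- transmission at left endpoint
      have hstep : M (k + (j + 1)) (1 + (j + 1)) (a (1 + (j + 1))) ≤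
          M (k + j) l (a (l + 1)) := by
        have := htrans_a (k + j) (l + 1) (by omega) (by omega)
        have he1 : l + 1 - 1 = l := by omega
        rw [he1] at this
        have he2 : 1 + (j + 1) = l + 1 := by omega
        have he3 : k + (j + 1) = (k + j) + 1 := by omega
        rw [he2, he3]
        exact this
      -- the sup over range (j+1)
      have hne : (Finset.range (j + 1)).Nonempty := Finset.nonempty_range_iff.mpr (by omega)
      set S : ℝ := (Finset.range (j + 1)).sup' hne (fun m => E (k + m)) with hS
      have hSmono : (Finset.range j).sup' (Finset.nonempty_range_iff.mpr (by omega))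
          (fun m => E (k + m)) ≤ S :=
        Finset.sup'_mono (fun m => E (k + m))
          (Finset.range_subset_range.mpr (by omega)) _
      have hEj : E (k + j) ≤ S := Finset.le_sup' (fun m => E (k + m)) (by simp)
      have hψx : 0 < ψ l (a (l + 1)) := hψ_pos l (by omega) hlI _ hal1
      -- bound M (k+j) l (a (l+1)) ≤ ρ * S
      have hmain : M (k + j) l (a (l + 1)) ≤ ρ * S := by
        have hmax := hmax_mid (k + j) l h2l hlI (a (l + 1)) hal1
        have hMal : 0 ≤ M (k + j) l (a l) := hM_nonneg (k + j) l (by omega) (by omega) _ hal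
        have hMbl : 0 ≤ M (k + j) l (b l) := hM_nonneg (k + j) l (by omega) (by omega) _ hbl
        -- first branch
        have hA : M (k + j) l (a l) * ψ l (a l) ≤ (ρ * S) * ψ l (a (l + 1)) := by
          have h1 : M (k + j) l (a l) * ψ l (a l) ≤ M (k + j) l (a l) * ψ l (a (l + 1)) :=
            mul_le_mul_of_nonneg_left (hψ_mono l h2l hlI) hMal
          have h2 : M (k + j) l (a l) ≤ ρ * (Finset.range j).sup'
              (Finset.nonempty_range_iff.mpr (by omega)) (fun m => E (k + m)) := hIH
          have h3 : M (k + j) l (a l) ≤ ρ * S :=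
            h2.trans (mul_le_mul_of_nonneg_left hSmono hρ0.le)
          exact h1.trans (mul_le_mul_of_nonneg_right h3 hψx.le)
        -- second branch
        have hB : M (k + j) l (b l) * ψ l (b l) ≤ (ρ * S) * ψ l (a (l + 1)) := by
          have h1 : M (k + j) l (b l) * ψ l (b l) ≤
              M (k + j) l (b l) * (ρ * ψ l (a (l + 1))) :=
            mul_le_mul_of_nonneg_left (hψ_contr l (by omega) hlI) hMbl
          have h2 : M (k + j) l (b l) ≤ E (k + j) :=
            hle_E (k + j) l (by omega) (by omega) _ hbl
          have h3 : M (k + j) l (b l) ≤ S := h2.trans hEj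
          have h4 : M (k + j) l (b l) * (ρ * ψ l (a (l + 1))) ≤
              S * (ρ * ψ l (a (l + 1))) :=
            mul_le_mul_of_nonneg_right h3 (by positivity)
          have := h1.trans h4
          linarith [this, mul_comm S (ρ * ψ l (a (l + 1)))]
        have : M (k + j) l (a (l + 1)) * ψ l (a (l + 1)) ≤ (ρ * S) * ψ l (a (l + 1)) :=
          hmax.trans (max_le hA hB)
        exact le_of_mul_le_mul_right this hψx
      exact hstep.trans hmain
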